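/- arXiv:1812.06268 — 6 statements merged into one kernel-verified Lean document; each statement's English description precedes it below -/
import Mathlib

section
/- The lower C-distribution function F_{X,C} : ℝ^d → [0,1] is quasiconcave, upper semicontinuous, and monotone nondecreasing with respect to the preorder induced by C (i.e., z - y ∈ C implies F_{X,C}(y) ≤ F_{X,C}(z)). -/
open MeasureTheory Set Filter Topology
open scoped ENNReal

noncomputable section

def dotp {d : ℕ} (w z : Fin d → ℝ) : ℝ := ∑ i, w i * z i

def dualCone {d : ℕ} (C : Set (Fin d → ℝ)) : Set (Fin d → ℝ) :=
  {w | ∀ z ∈ C, 0 ≤ dotp w z}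

def Fw {d : ℕ} {Ω : Type*} [MeasurableSpace Ω] (μ : Measure Ω)
    (X : Ω → Fin d → ℝ) (w z : Fin d → ℝ) : ℝ≥0∞ :=
  μ {ω | dotp w (X ω) ≤ dotp w z}

def FC {d : ℕ} {Ω : Type*} [MeasurableSpace Ω] (μ : Measure Ω)
    (X : Ω → Fin d → ℝ) (C : Set (Fin d → ℝ)) (z : Fin d → ℝ) : ℝ≥0∞ :=
  ⨅ w ∈ dualCone C \ {0}, Fw μ X w z

def Qlo {d : ℕ} {Ω : Type*} [MeasurableSpace Ω] (μ : Measure Ω)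
    (X : Ω → Fin d → ℝ) (C : Set (Fin d → ℝ)) (p : ℝ≥0∞) : Set (Fin d → ℝ) :=
  {z | p ≤ FC μ X C z}

lemma dotp_sub {d : ℕ} (w y z : Fin d → ℝ) : dotp w (z - y) = dotp w z - dotp w y := by
  simp [dotp, mul_sub, Finset.sum_sub_distrib]

lemma dotp_combo {d : ℕ} (w y z : Fin d → ℝ) (a b : ℝ) :
    dotp w (a • y + b • z) = a * dotp w y + b * dotp w z := by
  simp only [dotp, Pi.add_apply, Pi.smul_apply, smul_eq_mul, Finset.mul_sum,
    ← Finset.sum_add_distrib]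
  exact Finset.sum_congr rfl fun i _ => by ring

lemma dotp_continuous {d : ℕ} (w : Fin d → ℝ) : Continuous (dotp w) := by
  unfold dotp
  exact continuous_finset_sum _ fun i _ => continuous_const.mul (continuous_apply i)

lemma Fw_mono {d : ℕ} {Ω : Type*} [MeasurableSpace Ω] (μ : Measure Ω) (X : Ω → Fin d → ℝ)
    (w : Fin d → ℝ) {y z : Fin d → ℝ} (h : dotp w y ≤ dotp w z) :
    Fw μ X w y ≤ Fw μ X w z :=
  measure_mono fun ω hω => le_trans hω h

lemma Fw_usc {d : ℕ} {Ω : Type*} [MeasurableSpace Ω] (μ : Measure Ω) [IsFiniteMeasure μ]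
    (X : Ω → Fin d → ℝ) (hX : Measurable X) (w : Fin d → ℝ) :
    UpperSemicontinuous (fun z => Fw μ X w z) := by
  intro z₀ b hb
  set c := dotp w z₀ with hc
  have hfm : Measurable fun ω => dotp w (X ω) := (dotp_continuous w).measurable.comp hX
  set s : ℕ → Set Ω := fun n => {ω | dotp w (X ω) ≤ c + 1/(n+1)} with hs
  have hmeas : ∀ n, NullMeasurableSet (s n) μ := fun n =>
    (measurableSet_le hfm measurable_const).nullMeasurableSet
  have hanti : Antitone s := by
    intro m n hmn ω hω
    refine le_trans hω (add_le_add_right ?_ c)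
    exact one_div_le_one_div_of_le (by positivity)
      (add_le_add_left (Nat.cast_le.2 hmn) 1)
  have hiInter : (⋂ n, s n) = {ω | dotp w (X ω) ≤ c} := by
    ext ω
    simp only [hs, mem_iInter, mem_setOf_eq]
    constructor
    · intro h
      refine le_of_forall_pos_le_add fun ε hε => ?_
      obtain ⟨n, hn⟩ := exists_nat_one_div_lt hε
      exact (h n).trans (by linarith)
    · intro h n
      have : (0:ℝ) < 1/(n+1) := by positivity
      linarith
  have hT : Tendsto (fun n => μ (s n)) atTop (𝓝 (μ (⋂ n, s n))) :=
    tendsto_measure_iInter_atTop hmeas hanti ⟨0, measure_ne_top μ _⟩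
  rw [hiInter] at hT
  have hFw : μ {ω | dotp w (X ω) ≤ c} < b := hb
  obtain ⟨n, hn⟩ := (hT.eventually_lt_const hFw).exists
  have hopen : IsOpen {z : Fin d → ℝ | dotp w z < c + 1/(n+1)} :=
    isOpen_lt (dotp_continuous w) continuous_const
  have hmem : z₀ ∈ {z : Fin d → ℝ | dotp w z < c + 1/(n+1)} := by
    simp only [mem_setOf_eq, ← hc]
    have : (0:ℝ) < 1/(n+1) := by positivity
    linarith
  filter_upwards [hopen.mem_nhds hmem] with z hz
  calc Fw μ X w z ≤ μ (s n) := measure_mono fun ω hω => le_trans hω (le_of_lt hz)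
    _ < b := hn

theorem stmt_5 {d : ℕ} {Ω : Type*} [MeasurableSpace Ω] (μ : Measure Ω)
    [IsProbabilityMeasure μ] (X : Ω → Fin d → ℝ) (hX : Measurable X)
    (C : Set (Fin d → ℝ)) (hCne : C.Nonempty) (hCcl : IsClosed C)
    (hCco : Convex ℝ C) (hCcone : ∀ r : ℝ, 0 ≤ r → ∀ x ∈ C, r • x ∈ C)
    (hCproper : C ≠ univ) :
    (∀ b : ℝ≥0∞, Convex ℝ {z : Fin d → ℝ | b ≤ FC μ X C z}) ∧
      UpperSemicontinuous (FC μ X C) ∧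
      ∀ y z : Fin d → ℝ, z - y ∈ C → FC μ X C y ≤ FC μ X C z := by
  refine ⟨?_, ?_, ?_⟩
  · intro b y hy z hz a a' ha ha' hab
    simp only [mem_setOf_eq, FC] at hy hz ⊢
    refine le_iInf₂ fun w hw => ?_
    have hy' : b ≤ Fw μ X w y := hy.trans (iInf₂_le w hw)
    have hz' : b ≤ Fw μ X w z := hz.trans (iInf₂_le w hw)
    rcases le_total (dotp w y) (dotp w z) with h | h
    · refine hy'.trans (Fw_mono μ X w ?_)
      rw [dotp_combo]
      calc dotp w y = a * dotp w y + a' * dotp w y := by rw [← add_mul, hab, one_mul]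
        _ ≤ a * dotp w y + a' * dotp w z :=
          add_le_add_right (mul_le_mul_of_nonneg_left h ha') _
    · refine hz'.trans (Fw_mono μ X w ?_)
      rw [dotp_combo]
      calc dotp w z = a * dotp w z + a' * dotp w z := by rw [← add_mul, hab, one_mul]
        _ ≤ a * dotp w y + a' * dotp w z :=
          add_le_add_left (mul_le_mul_of_nonneg_left h ha) _

  · intro z₀ b hb
    simp only [FC, iInf_lt_iff] at hb
    obtain ⟨w, hw, hwb⟩ := hb
    filter_upwards [Fw_usc μ X hX w z₀ b hwb] with z hz
    exact lt_of_le_of_lt (iInf₂_le w hw) hz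
  · intro y z hzy
    refine le_iInf₂ fun w hw => ?_
    refine (iInf₂_le w hw).trans (Fw_mono μ X w ?_)
    have h0 : 0 ≤ dotp w (z - y) := hw.1 _ hzy
    rw [dotp_sub] at h0
    linarith
end
end

section
/- If for every w ∈ C⁺\{0} and every r ∈ ℝ one has P(wᵀX = r) = 0, then the lower C-distribution function F_{X,C} is continuous on ℝ^d. -/
open MeasureTheory Set Filter Topology
open scoped ENNReal

set_option maxHeartbeats 1000000
noncomputable section

lemma continuous_dotp {d : ℕ} :
    Continuous fun p : (Fin d → ℝ) × (Fin d → ℝ) => dotp p.1 p.2 := by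
  unfold dotp
  exact continuous_finset_sum _ fun i _ =>
    (((continuous_apply i).comp continuous_fst).mul ((continuous_apply i).comp continuous_snd))

lemma continuous_dotp_fst {d : ℕ} (x : Fin d → ℝ) : Continuous fun v : Fin d → ℝ => dotp v x :=
  continuous_dotp.comp (continuous_id.prodMk continuous_const)

lemma dotp_smul_left {d : ℕ} (c : ℝ) (w z : Fin d → ℝ) :
    dotp (c • w) z = c * dotp w z := by
  simp [dotp, Finset.mul_sum, mul_assoc]

lemma Fw_smul {d : ℕ} {Ω : Type*} [MeasurableSpace Ω] (μ : Measure Ω)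
    (X : Ω → Fin d → ℝ) {c : ℝ} (hc : 0 < c) (w z : Fin d → ℝ) :
    Fw μ X (c • w) z = Fw μ X w z := by
  unfold Fw
  congr 1
  ext ω
  simp [dotp_smul_left, mul_le_mul_iff_right₀ hc]

lemma continuous_dotp_snd {d : ℕ} (v : Fin d → ℝ) : Continuous fun x : Fin d → ℝ => dotp v x :=
  continuous_dotp.comp (continuous_const.prodMk continuous_id)

lemma measurable_dotpX {d : ℕ} {Ω : Type*} [MeasurableSpace Ω] {X : Ω → Fin d → ℝ}
    (hX : Measurable X) (v : Fin d → ℝ) : Measurable fun ω => dotp v (X ω) :=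
  ((continuous_dotp_snd v).measurable).comp hX

lemma tendsto_Fw {d : ℕ} {Ω : Type*} [MeasurableSpace Ω] (μ : Measure Ω)
    [IsFiniteMeasure μ] (X : Ω → Fin d → ℝ) (hX : Measurable X)
    {wn zn : ℕ → Fin d → ℝ} {w z : Fin d → ℝ}
    (hw : Tendsto wn atTop (𝓝 w)) (hz : Tendsto zn atTop (𝓝 z))
    (hatom : μ {ω | dotp w (X ω) = dotp w z} = 0) :
    Tendsto (fun n => Fw μ X (wn n) (zn n)) atTop (𝓝 (Fw μ X w z)) := by
  have hmeas : ∀ (v u : Fin d → ℝ), MeasurableSet {ω | dotp v (X ω) ≤ dotp v u} := by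
    intro v u
    exact (measurable_dotpX hX v) measurableSet_Iic
  apply tendsto_measure_of_ae_tendsto_indicator_of_isFiniteMeasure atTop
    (hmeas w z) (fun n => hmeas (wn n) (zn n))
  have hae : ∀ᵐ ω ∂μ, dotp w (X ω) ≠ dotp w z := by
    rw [ae_iff]; simpa using hatom
  filter_upwards [hae] with ω hω
  have hsn : Tendsto (fun n => dotp (wn n) (X ω)) atTop (𝓝 (dotp w (X ω))) :=
    ((continuous_dotp_fst (X ω)).tendsto w).comp hw
  have htn : Tendsto (fun n => dotp (wn n) (zn n)) atTop (𝓝 (dotp w z)) :=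
    (continuous_dotp.tendsto (w, z)).comp (hw.prodMk_nhds hz)
  rcases lt_or_gt_of_ne hω with hlt | hgt
  · filter_upwards [hsn.eventually_lt htn hlt] with n hn
    exact iff_of_true hn.le hlt.le
  · filter_upwards [htn.eventually_lt hsn hgt] with n hn
    exact iff_of_false (not_le.mpr hn) (not_le.mpr hgt)

lemma isClosed_dualCone {d : ℕ} (C : Set (Fin d → ℝ)) : IsClosed (dualCone C) := by
  have : dualCone C = ⋂ z ∈ C, {w : Fin d → ℝ | 0 ≤ dotp w z} := by
    ext w; simp [dualCone, mem_iInter]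
  rw [this]
  exact isClosed_biInter fun z _ => isClosed_le continuous_const (continuous_dotp_fst z)

lemma dualCone_smul {d : ℕ} {C : Set (Fin d → ℝ)} {w : Fin d → ℝ} (hw : w ∈ dualCone C)
    {c : ℝ} (hc : 0 ≤ c) : c • w ∈ dualCone C := by
  intro z hz
  rw [dotp_smul_left]
  exact mul_nonneg hc (hw z hz)

lemma dualCone_nonempty {d : ℕ} {C : Set (Fin d → ℝ)} (hCne : C.Nonempty) (hCcl : IsClosed C)
    (hCco : Convex ℝ C) (hCcone : ∀ r : ℝ, 0 ≤ r → ∀ x ∈ C, r • x ∈ C)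
    (hCproper : C ≠ univ) : ∃ w, w ∈ dualCone C ∧ w ≠ 0 := by
  obtain ⟨x, hx⟩ := (ne_univ_iff_exists_notMem C).mp hCproper
  obtain ⟨f, u, hfu, hux⟩ := geometric_hahn_banach_closed_point hCco hCcl hx
  have h0C : (0 : Fin d → ℝ) ∈ C := by
    obtain ⟨c0, hc0⟩ := hCne
    simpa using hCcone 0 le_rfl c0 hc0
  have hu0 : 0 < u := by simpa using hfu 0 h0C
  have hfle : ∀ a ∈ C, f a ≤ 0 := by
    intro a ha
    by_contra hpos
    push_neg at hpos
    have h2 := hfu _ (hCcone (2 * u / f a) (by positivity) a ha)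
    rw [f.map_smul, smul_eq_mul, div_mul_cancel₀ _ hpos.ne'] at h2
    linarith
  refine ⟨fun i => -(f (Pi.single i 1)), ?_, ?_⟩
  · intro a ha
    have h1 : f a = ∑ i, a i * f (Pi.single i 1) := by
      have h0 := LinearMap.pi_apply_eq_sum_univ (f : (Fin d → ℝ) →ₗ[ℝ] ℝ) a
      simp only [smul_eq_mul, ContinuousLinearMap.coe_coe] at h0
      have hps : ∀ i : Fin d, (fun j => if i = j then (1:ℝ) else 0) = Pi.single i (1:ℝ) :=
        fun i => funext fun j => by simp [Pi.single_apply, eq_comm]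
      simp only [hps] at h0
      exact h0
    have : dotp (fun i => -(f (Pi.single i 1))) a = -(f a) := by
      rw [dotp, h1, ← Finset.sum_neg_distrib]
      exact Finset.sum_congr rfl fun i _ => by ring
    rw [this]
    linarith [hfle a ha]
  · intro h
    have h1 : f x = ∑ i, x i * f (Pi.single i 1) := by
      have h0 := LinearMap.pi_apply_eq_sum_univ (f : (Fin d → ℝ) →ₗ[ℝ] ℝ) x
      simp only [smul_eq_mul, ContinuousLinearMap.coe_coe] at h0
      have hps : ∀ i : Fin d, (fun j => if i = j then (1:ℝ) else 0) = Pi.single i (1:ℝ) :=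
        fun i => funext fun j => by simp [Pi.single_apply, eq_comm]
      simp only [hps] at h0
      exact h0
    have hz : ∀ i, f (Pi.single i 1) = (0 : ℝ) := fun i => by
      have := congrFun h i; simpa [neg_eq_zero] using this
    have : f x = 0 := by simp [h1, hz]
    linarith

theorem stmt_6 {d : ℕ} {Ω : Type*} [MeasurableSpace Ω] (μ : Measure Ω)
    [IsProbabilityMeasure μ] (X : Ω → Fin d → ℝ) (hX : Measurable X)
    (C : Set (Fin d → ℝ)) (hCne : C.Nonempty) (hCcl : IsClosed C)
    (hCco : Convex ℝ C) (hCcone : ∀ r : ℝ, 0 ≤ r → ∀ x ∈ C, r • x ∈ C)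
    (hCproper : C ≠ univ)
    (hcont : ∀ w ∈ dualCone C \ {0}, ∀ r : ℝ, μ {ω | dotp w (X ω) = r} = 0) :
    Continuous (FC μ X C) := by
  classical
  set S : Set (Fin d → ℝ) := dualCone C ∩ Metric.sphere 0 1 with hS
  have hSsub : S ⊆ dualCone C \ {0} := by
    rintro v ⟨hv1, hv2⟩
    refine ⟨hv1, ?_⟩
    rw [mem_sphere_zero_iff_norm] at hv2
    intro h0
    rw [h0] at hv2
    simp at hv2
  have hnormalize : ∀ v ∈ dualCone C \ {0}, (‖v‖⁻¹ • v) ∈ S ∧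
      Fw μ X (‖v‖⁻¹ • v) = Fw μ X v := by
    rintro v ⟨hv1, hv2⟩
    have hvne : ‖v‖ ≠ 0 := norm_ne_zero_iff.mpr hv2
    have hpos : 0 < ‖v‖⁻¹ := by positivity
    refine ⟨⟨dualCone_smul hv1 hpos.le, ?_⟩, funext fun z => Fw_smul μ X hpos v z⟩
    rw [mem_sphere_zero_iff_norm, norm_smul]
    simp [abs_of_pos hpos, inv_mul_cancel₀ hvne]
  have hSne : S.Nonempty := by
    obtain ⟨w, hw1, hw2⟩ := dualCone_nonempty hCne hCcl hCco hCcone hCproper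
    exact ⟨_, (hnormalize w ⟨hw1, hw2⟩).1⟩
  have hScomp : IsCompact S :=
    (isCompact_sphere (0 : Fin d → ℝ) 1).inter_left (isClosed_dualCone C)
  have hFCS : FC μ X C = fun z => ⨅ v ∈ S, Fw μ X v z := by
    funext z
    apply le_antisymm
    · exact iInf_le_iInf_of_subset hSsub
    · refine le_iInf₂ fun v hv => ?_
      obtain ⟨hmem, heq⟩ := hnormalize v hv
      calc ⨅ u ∈ S, Fw μ X u z ≤ Fw μ X (‖v‖⁻¹ • v) z := iInf₂_le _ hmem
        _ = Fw μ X v z := by rw [heq]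
  rw [hFCS]
  rw [continuous_iff_seqContinuous]
  intro zs z hz
  have hkey : ∀ (v : Fin d → ℝ), v ∈ S →
      Tendsto (fun n => Fw μ X v (zs n)) atTop (𝓝 (Fw μ X v z)) := by
    intro v hv
    exact tendsto_Fw μ X hX tendsto_const_nhds hz (hcont v (hSsub hv) (dotp v z))
  refine tendsto_of_le_liminf_of_limsup_le ?_ ?_ (by isBoundedDefault) (by isBoundedDefault)
  · -- liminf
    by_contra hcon
    push_neg at hcon
    obtain ⟨b, hb1, hb2⟩ := exists_between hcon
    have hfreq : ∃ᶠ n in atTop, (⨅ v ∈ S, Fw μ X v (zs n)) < b := by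
      by_contra hf
      rw [not_frequently] at hf
      push_neg at hf
      have : b ≤ liminf (fun n => (fun z => ⨅ v ∈ S, Fw μ X v z) (zs n)) atTop := by
        apply le_liminf_of_le
        · isBoundedDefault
        · simpa using hf
      exact absurd (lt_of_le_of_lt this hb1) (lt_irrefl _)
    obtain ⟨φ, hφmono, hφ⟩ := extraction_of_frequently_atTop hfreq
    have hchoose : ∀ k, ∃ v ∈ S, Fw μ X v (zs (φ k)) < b := by
      intro k
      by_contra hc
      push_neg at hc
      exact absurd (lt_of_le_of_lt (le_iInf₂ hc) (hφ k)) (lt_irrefl _)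
    choose w hwS hwlt using hchoose
    obtain ⟨winf, hwinfS, ψ, hψmono, hψtend⟩ := hScomp.tendsto_subseq hwS
    have hztend : Tendsto (fun k => zs (φ (ψ k))) atTop (𝓝 z) :=
      hz.comp ((hφmono.comp hψmono).tendsto_atTop)
    have hFtend : Tendsto (fun k => Fw μ X (w (ψ k)) (zs (φ (ψ k)))) atTop
        (𝓝 (Fw μ X winf z)) :=
      tendsto_Fw μ X hX hψtend hztend (hcont winf (hSsub hwinfS) (dotp winf z))
    have hle : Fw μ X winf z ≤ b :=
      le_of_tendsto hFtend (Eventually.of_forall fun k => (hwlt (ψ k)).le)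
    have hge : (⨅ v ∈ S, Fw μ X v z) ≤ Fw μ X winf z := iInf₂_le _ hwinfS
    exact absurd (lt_of_le_of_lt (hge.trans hle) hb2) (lt_irrefl _)
  · -- limsup
    refine le_iInf₂ fun v hv => ?_
    calc limsup (fun n => (fun z => ⨅ u ∈ S, Fw μ X u z) (zs n)) atTop
        ≤ limsup (fun n => Fw μ X v (zs n)) atTop :=
          limsup_le_limsup (Eventually.of_forall fun n => iInf₂_le _ hv)
      _ = Fw μ X v z := (hkey v hv).limsup_eq
end
end

section
/- For all p ∈ [0,1], Q⁻_{X,C}(p) = ⋂_{w ∈ C⁺\{0}} ⋂ {y + H⁺(w) : y ∈ ℝ^d, P(X ∈ y - int H⁺(w)) < p}, where the inner intersection is over all such halfspaces y + H⁺(w) with P(wᵀX < wᵀy) < p. -/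
open MeasureTheory Set Filter
open scoped ENNReal

noncomputable section

theorem stmt_9 {d : ℕ} {Ω : Type*} [MeasurableSpace Ω] (μ : Measure Ω)
    [IsProbabilityMeasure μ] (X : Ω → Fin d → ℝ) (hX : Measurable X)
    (C : Set (Fin d → ℝ)) (hCne : C.Nonempty) (hCcl : IsClosed C)
    (hCco : Convex ℝ C) (hCcone : ∀ r : ℝ, 0 ≤ r → ∀ x ∈ C, r • x ∈ C)
    (hCproper : C ≠ univ) (p : ℝ≥0∞) (hp : p ≤ 1) :
    Qlo μ X C p =
      ⋂ w ∈ dualCone C \ {0},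
        ⋂ y ∈ {y : Fin d → ℝ | μ {ω | dotp w (X ω) < dotp w y} < p},
          {z : Fin d → ℝ | dotp w y ≤ dotp w z} := by
  ext z
  simp only [Qlo, FC, Fw, mem_setOf_eq, mem_iInter, le_iInf_iff]
  constructor
  · rintro h w hw y hy
    by_contra hzy
    push_neg at hzy
    have hsub : {ω | dotp w (X ω) ≤ dotp w z} ⊆ {ω | dotp w (X ω) < dotp w y} :=
      fun ω hω => lt_of_le_of_lt hω hzy
    exact absurd (lt_of_le_of_lt (le_trans (h w hw) (measure_mono hsub)) hy)
      (lt_irrefl p)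
  · intro h w hw
    by_contra h'
    push_neg at h'
    set s := dotp w z with hs
    have hfmeas : Measurable (fun ω => dotp w (X ω)) := by
      apply Finset.measurable_sum
      intro i _
      exact (measurable_const.mul ((measurable_pi_apply i).comp hX))
    set A : ℕ → Set Ω := fun n => {ω | dotp w (X ω) < s + 1 / (n + 1)} with hA
    have hAmeas : ∀ n, MeasurableSet (A n) := fun n =>
      measurableSet_lt hfmeas measurable_const
    have hanti : Antitone A := by
      intro m n hmn ω hω
      have h1 : (1 : ℝ) / (n + 1) ≤ 1 / (m + 1) := by
        apply one_div_le_one_div_of_le (by positivity)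
        exact_mod_cast Nat.succ_le_succ hmn
      simp only [hA, mem_setOf_eq] at hω ⊢
      linarith
    have hInter : ⋂ n, A n = {ω | dotp w (X ω) ≤ s} := by
      ext ω
      simp only [mem_iInter, mem_setOf_eq, hA]
      constructor
      · intro hall
        refine le_of_forall_pos_lt_add fun ε hε => ?_
        obtain ⟨n, hn⟩ := exists_nat_one_div_lt hε
        exact lt_of_lt_of_le (hall n) (by push_cast; linarith)
      · intro hle n
        have : (0 : ℝ) < 1 / (n + 1) := by positivity
        linarith
    have hμ : μ (⋂ n, A n) = ⨅ n, μ (A n) :=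
      Directed.measure_iInter (fun n => (hAmeas n).nullMeasurableSet)
        hanti.directed_ge ⟨0, measure_ne_top μ _⟩
    have hiInf : ⨅ n, μ (A n) < p := by
      rw [← hμ, hInter]; exact h'
    obtain ⟨n, hn⟩ := iInf_lt_iff.mp hiInf
    -- construct y
    have hw0 : w ≠ 0 := hw.2
    have hww : 0 < dotp w w := by
      have hne : ∃ i, w i ≠ 0 := by
        by_contra hc
        push_neg at hc
        exact hw0 (funext hc)
      obtain ⟨i, hi⟩ := hne
      calc (0:ℝ) < w i * w i := mul_self_pos.mpr hi
        _ ≤ ∑ j, w j * w j :=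
          Finset.single_le_sum (f := fun j => w j * w j) (fun j _ => mul_self_nonneg _) (Finset.mem_univ i)
    set c : ℝ := (1 / (n + 1)) / dotp w w with hc
    set y : Fin d → ℝ := fun i => z i + c * w i with hy
    have hdy : dotp w y = s + 1 / (n + 1) := by
      have h1 : dotp w y = dotp w z + c * dotp w w := by
        simp only [dotp, hy, Finset.mul_sum, ← Finset.sum_add_distrib]
        exact Finset.sum_congr rfl (fun i _ => by ring)
      rw [h1, hc, div_mul_cancel₀ _ (ne_of_gt hww), ← hs]
    have := h w hw y (by rw [hdy]; exact hn)
    rw [hdy] at this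
    have hpos : (0 : ℝ) < 1 / (n + 1) := by positivity
    linarith
end
end

section
/- The composition Q⁻_{X,C} ∘ F^△_{X,C} : 𝒢(ℝ^d, C) → 𝒢(ℝ^d, C) is a closure operator with respect to ⊆: it is extensive (D ⊆ Q⁻_{X,C}(F^△_{X,C}(D))), monotone, and idempotent. -/
open MeasureTheory Set Filter
open scoped ENNReal Pointwise

noncomputable section

theorem stmt_15 {d : ℕ} {Ω : Type*} [MeasurableSpace Ω] (μ : Measure Ω)
    [IsProbabilityMeasure μ] (X : Ω → Fin d → ℝ) (hX : Measurable X)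
    (C : Set (Fin d → ℝ)) (hCne : C.Nonempty) (hCcl : IsClosed C)
    (hCco : Convex ℝ C) (hCcone : ∀ r : ℝ, 0 ≤ r → ∀ x ∈ C, r • x ∈ C)
    (hCproper : C ≠ univ) :
    (∀ D : Set (Fin d → ℝ), D = closure (convexHull ℝ (D + C)) →
        D ⊆ Qlo μ X C (⨅ z ∈ D, FC μ X C z)) ∧
    (∀ D D' : Set (Fin d → ℝ), D = closure (convexHull ℝ (D + C)) →
        D' = closure (convexHull ℝ (D' + C)) → D ⊆ D' →
        Qlo μ X C (⨅ z ∈ D, FC μ X C z) ⊆ Qlo μ X C (⨅ z ∈ D', FC μ X C z)) ∧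
    (∀ D : Set (Fin d → ℝ), D = closure (convexHull ℝ (D + C)) →
        Qlo μ X C (⨅ z ∈ Qlo μ X C (⨅ z ∈ D, FC μ X C z), FC μ X C z) =
          Qlo μ X C (⨅ z ∈ D, FC μ X C z)) := by
  refine ⟨?_, ?_, ?_⟩
  · intro D _ z hz
    show (⨅ z ∈ D, FC μ X C z) ≤ FC μ X C z
    exact iInf₂_le z hz
  · intro D D' _ _ hDD' z hz
    have hz' : (⨅ z ∈ D, FC μ X C z) ≤ FC μ X C z := hz
    show (⨅ z ∈ D', FC μ X C z) ≤ FC μ X C z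
    exact le_trans (le_iInf₂ fun w hw => iInf₂_le w (hDD' hw)) hz'
  · intro D _
    have h : (⨅ z ∈ Qlo μ X C (⨅ z ∈ D, FC μ X C z), FC μ X C z)
        = ⨅ z ∈ D, FC μ X C z := by
      refine le_antisymm (le_iInf₂ fun z hz => ?_) (le_iInf₂ fun z hz => hz)
      have hz' : (⨅ z ∈ D, FC μ X C z) ≤ FC μ X C z := iInf₂_le z hz
      exact iInf₂_le z hz'
    rw [h]
end
end

section
/- If for every w ∈ C⁺\{0} the cumulative distribution function of wᵀX is strictly increasing on ℝ, then for every D ∈ 𝒢(ℝ^d, C), D = cl_Φ(D), where cl_Φ(D) = ⋂_{w ∈ C⁺\{0}} {z : F_{X,w}(z) ≥ inf_{y ∈ D} F_{X,w}(y)}. -/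
open MeasureTheory Set Filter
open scoped ENNReal Pointwise

noncomputable section

lemma dotp_repr {d : ℕ} (f : (Fin d → ℝ) →L[ℝ] ℝ) (z : Fin d → ℝ) :
    dotp (fun i => f fun j => if i = j then 1 else 0) z = f z := by
  rw [dotp, ← ContinuousLinearMap.coe_coe f, LinearMap.pi_apply_eq_sum_univ]
  simp [mul_comm, smul_eq_mul]

/-- Separation lemma: if `S` is a nonempty closed convex set stable under adding
nonnegative multiples of elements of `C`, and `z ∉ S`, we can separate with a
functional in the dual cone. -/
lemma sep_lemma {d : ℕ} {C S : Set (Fin d → ℝ)} (hSne : S.Nonempty)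
    (hScl : IsClosed S) (hSco : Convex ℝ S)
    (hSC : ∀ y ∈ S, ∀ c ∈ C, ∀ r : ℝ, 0 ≤ r → y + r • c ∈ S)
    {z : Fin d → ℝ} (hz : z ∉ S) :
    ∃ w ∈ dualCone C \ {0}, ∃ s : ℝ, dotp w z < s ∧ ∀ y ∈ S, s ≤ dotp w y := by
  obtain ⟨f, u, hfz, hfS⟩ := geometric_hahn_banach_point_closed hSco hScl hz
  obtain ⟨y0, hy0⟩ := hSne
  set w : Fin d → ℝ := fun i => f fun j => if i = j then 1 else 0 with hwdef
  have hw : ∀ v, dotp w v = f v := dotp_repr f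
  refine ⟨w, ⟨?_, ?_⟩, u, by rw [hw]; exact hfz, fun y hy => by rw [hw]; exact (hfS y hy).le⟩
  · intro c hc
    rw [hw]
    by_contra h
    push_neg at h
    have hfc : f c < 0 := h
    have hfy0 : u < f y0 := hfS y0 hy0
    have hr : 0 ≤ (f y0 + 1 - u) / (-f c) :=
      div_nonneg (by linarith) (by linarith)
    have hmem := hfS _ (hSC y0 hy0 c hc _ hr)
    rw [map_add, f.map_smul, smul_eq_mul] at hmem
    have hmul : ((f y0 + 1 - u) / (-f c)) * f c = u - f y0 - 1 := by
      rw [div_mul_eq_mul_div, div_eq_iff (by linarith : -f c ≠ 0)]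
      ring
    rw [hmul] at hmem
    linarith
  · intro hw0
    have h1 : f z = 0 := by rw [← hw, hw0]; simp [dotp]
    have h2 : f y0 = 0 := by rw [← hw, hw0]; simp [dotp]
    have := hfS y0 hy0
    linarith

theorem stmt_17 {d : ℕ} {Ω : Type*} [MeasurableSpace Ω] (μ : Measure Ω)
    [IsProbabilityMeasure μ] (X : Ω → Fin d → ℝ) (hX : Measurable X)
    (C : Set (Fin d → ℝ)) (hCne : C.Nonempty) (hCcl : IsClosed C)
    (hCco : Convex ℝ C) (hCcone : ∀ r : ℝ, 0 ≤ r → ∀ x ∈ C, r • x ∈ C)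
    (hCproper : C ≠ univ)
    (hstrict : ∀ w ∈ dualCone C \ {0},
      StrictMono (fun t : ℝ => μ {ω | dotp w (X ω) ≤ t})) :
    ∀ D : Set (Fin d → ℝ), D = closure (convexHull ℝ (D + C)) →
      D = ⋂ w ∈ dualCone C \ {0},
            {z : Fin d → ℝ | (⨅ y ∈ D, Fw μ X w y) ≤ Fw μ X w z} := by
  -- C is stable under the operation in sep_lemma
  have hCstab : ∀ y ∈ C, ∀ c ∈ C, ∀ r : ℝ, 0 ≤ r → y + r • c ∈ C := by
    intro y hy c hc r hr
    have hrc : r • c ∈ C := hCcone r hr c hc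
    have hmid : (1/2 : ℝ) • y + (1/2 : ℝ) • (r • c) ∈ C :=
      hCco hy hrc (by norm_num) (by norm_num) (by norm_num)
    have := hCcone 2 (by norm_num) _ hmid
    have heq : (2:ℝ) • ((1/2 : ℝ) • y + (1/2 : ℝ) • (r • c)) = y + r • c := by
      rw [smul_add, smul_smul, smul_smul]
      norm_num
    rwa [heq] at this
  -- there is a nonzero dual vector
  obtain ⟨x, hx⟩ := (ne_univ_iff_exists_notMem C).mp hCproper
  obtain ⟨w₀, hw₀, _⟩ := sep_lemma hCne hCcl hCco hCstab hx
  intro D hD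
  have hDCsub : D + C ⊆ D := by
    calc D + C ⊆ convexHull ℝ (D + C) := subset_convexHull ℝ _
      _ ⊆ closure (convexHull ℝ (D + C)) := subset_closure
      _ = D := hD.symm
  have hDcl : IsClosed D := hD ▸ isClosed_closure
  have hDco : Convex ℝ D := hD ▸ (convex_convexHull ℝ _).closure
  have hDstab : ∀ y ∈ D, ∀ c ∈ C, ∀ r : ℝ, 0 ≤ r → y + r • c ∈ D := by
    intro y hy c hc r hr
    exact hDCsub (Set.add_mem_add hy (hCcone r hr c hc))
  apply Set.Subset.antisymm
  · intro z hz
    simp only [Set.mem_iInter, Set.mem_setOf_eq]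
    intro w _
    exact iInf₂_le z hz
  · intro z hz
    simp only [Set.mem_iInter, Set.mem_setOf_eq] at hz
    by_contra hzD
    rcases D.eq_empty_or_nonempty with hDe | hDne
    · have := hz w₀ hw₀
      rw [hDe] at this
      simp only [Set.mem_empty_iff_false, iInf_false, iInf_top, top_le_iff] at this
      exact (measure_ne_top μ _) this
    · obtain ⟨w, hw, s, hzs, hsD⟩ := sep_lemma hDne hDcl hDco hDstab hzD
      have hlt : Fw μ X w z < μ {ω | dotp w (X ω) ≤ s} := hstrict w hw hzs
      have hle : μ {ω | dotp w (X ω) ≤ s} ≤ ⨅ y ∈ D, Fw μ X w y := by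
        refine le_iInf₂ fun y hy => ?_
        exact measure_mono fun ω hω => le_trans hω (hsD y hy)
      exact absurd (hz w hw) (not_le.mpr (lt_of_lt_of_le hlt hle))
end
end

section
/- Let U be a standard uniform random variable and define the random set 𝒳(ω) = Q⁻_{X,C}(U(ω)). For every compact K ⊆ ℝ^d, the capacity functional satisfies T_𝒳(K) := P(𝒳 ∩ K ≠ ∅) = max_{z ∈ K} F_{X,C}(z); in particular T_𝒳({z}) = F_{X,C}(z) for every z ∈ ℝ^d, so F_{X,C} and T_𝒳 determine each other. -/
open MeasureTheory Set Filter
open scoped ENNReal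

noncomputable section

/-- A proper closed convex cone has a nonzero dual vector. -/
lemma exists_dual_nonzero {d : ℕ} (C : Set (Fin d → ℝ)) (hCne : C.Nonempty)
    (hCcl : IsClosed C) (hCco : Convex ℝ C)
    (hCcone : ∀ r : ℝ, 0 ≤ r → ∀ x ∈ C, r • x ∈ C) (hCproper : C ≠ univ) :
    ∃ w, w ∈ dualCone C \ ({0} : Set (Fin d → ℝ)) := by
  obtain ⟨x₀, hx₀⟩ := hCne
  have h0 : (0 : Fin d → ℝ) ∈ C := by
    have := hCcone 0 le_rfl x₀ hx₀
    simpa using this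
  obtain ⟨x, hx⟩ : ∃ x, x ∉ C := by
    by_contra h
    push_neg at h
    exact hCproper (eq_univ_of_forall h)
  obtain ⟨f, u, hfu, hux⟩ := geometric_hahn_banach_closed_point hCco hCcl hx
  have hu0 : 0 < u := by simpa using hfu 0 h0
  have hfle : ∀ a ∈ C, f a ≤ 0 := by
    intro a ha
    by_contra h
    push_neg at h
    obtain ⟨r, hr⟩ := exists_nat_gt (u / f a)
    have hrC : (r : ℝ) • a ∈ C := hCcone r (Nat.cast_nonneg r) a ha
    have h2 := hfu _ hrC
    rw [_root_.map_smul, smul_eq_mul] at h2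
    nlinarith [(div_lt_iff₀ h).mp hr]
  set w : Fin d → ℝ := fun i => -(f (fun j => if i = j then 1 else 0)) with hw
  have key : ∀ z : Fin d → ℝ, dotp w z = -(f z) := by
    intro z
    conv_rhs => rw [pi_eq_sum_univ z]
    rw [map_sum]
    simp only [_root_.map_smul, smul_eq_mul]
    rw [dotp, ← Finset.sum_neg_distrib]
    refine Finset.sum_congr rfl fun i _ => by simp only [hw]; ring
  refine ⟨w, fun z hz => ?_, fun hw0 => ?_⟩
  · rw [key]
    linarith [hfle z hz]
  · have hfx : f x = 0 := by
      have := key x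
      rw [hw0] at this
      simp [dotp] at this
      linarith
    linarith [hux, hfx]

lemma FC_le_one {d : ℕ} {Ω : Type*} [MeasurableSpace Ω] (μ : Measure Ω)
    [IsProbabilityMeasure μ] (X : Ω → Fin d → ℝ) (C : Set (Fin d → ℝ))
    (hne : ∃ w, w ∈ dualCone C \ ({0} : Set (Fin d → ℝ))) (z : Fin d → ℝ) :
    FC μ X C z ≤ 1 := by
  obtain ⟨w, hw⟩ := hne
  exact le_trans (biInf_le _ hw) (prob_le_one)

/-- key distribution computation -/
lemma measure_ofReal_le {Ω : Type*} [MeasurableSpace Ω] (μ : Measure Ω)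
    [IsProbabilityMeasure μ] (U : Ω → ℝ) (hU : Measurable U)
    (hUdist : μ.map U = volume.restrict (Icc (0 : ℝ) 1))
    (s : ℝ≥0∞) (hs : s ≤ 1) :
    μ {ω | ENNReal.ofReal (U ω) ≤ s} = s := by
  have hst : s ≠ ⊤ := ne_top_of_le_ne_top ENNReal.one_ne_top hs
  have hset : {ω | ENNReal.ofReal (U ω) ≤ s} = U ⁻¹' Iic s.toReal := by
    ext ω
    simp [ENNReal.ofReal_le_iff_le_toReal hst]
  rw [hset, ← Measure.map_apply hU measurableSet_Iic, hUdist,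
    Measure.restrict_apply measurableSet_Iic]
  have h1 : (0:ℝ) ≤ s.toReal := ENNReal.toReal_nonneg
  have h2 : s.toReal ≤ 1 := by
    rw [← ENNReal.toReal_one]
    exact ENNReal.toReal_mono ENNReal.one_ne_top hs
  have : Iic s.toReal ∩ Icc (0:ℝ) 1 = Icc 0 s.toReal := by
    ext t
    simp only [mem_inter_iff, mem_Iic, mem_Icc]
    constructor
    · rintro ⟨h, h0, _⟩; exact ⟨h0, h⟩
    · rintro ⟨h0, h⟩; exact ⟨h, h0, h.trans h2⟩
  rw [this, Real.volume_Icc]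
  simp [ENNReal.ofReal_toReal hst]

lemma measure_ofReal_eq {Ω : Type*} [MeasurableSpace Ω] (μ : Measure Ω)
    [IsProbabilityMeasure μ] (U : Ω → ℝ) (hU : Measurable U)
    (hUdist : μ.map U = volume.restrict (Icc (0 : ℝ) 1))
    (s : ℝ≥0∞) (hs : s ≤ 1) :
    μ {ω | ENNReal.ofReal (U ω) = s} = 0 := by
  have hst : s ≠ ⊤ := ne_top_of_le_ne_top ENNReal.one_ne_top hs
  have hsub : {ω | ENNReal.ofReal (U ω) = s} ⊆ U ⁻¹' (Iic 0 ∪ {s.toReal}) := by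
    intro ω hω
    rcases le_or_gt (U ω) 0 with h | h
    · exact Or.inl h
    · right
      simp only [mem_singleton_iff]
      rw [← hω, ENNReal.toReal_ofReal h.le]
  refine le_antisymm (le_trans (measure_mono hsub) ?_) (zero_le)
  have hmeas : MeasurableSet (Iic (0:ℝ) ∪ {s.toReal}) :=
    measurableSet_Iic.union (measurableSet_singleton _)
  rw [← Measure.map_apply hU hmeas, hUdist, Measure.restrict_apply hmeas]
  have hsub2 : (Iic (0:ℝ) ∪ {s.toReal}) ∩ Icc 0 1 ⊆ {0, s.toReal} := by
    rintro t ⟨ht | ht, ht0, _⟩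
    · exact Or.inl (le_antisymm ht ht0)
    · exact Or.inr ht
  refine le_trans (measure_mono hsub2) ?_
  refine le_trans (measure_union_le {0} {s.toReal}) ?_
  rw [Real.volume_singleton, Real.volume_singleton]
  simp

theorem stmt_19 {d : ℕ} {Ω : Type*} [MeasurableSpace Ω] (μ : Measure Ω)
    [IsProbabilityMeasure μ] (X : Ω → Fin d → ℝ) (hX : Measurable X)
    (C : Set (Fin d → ℝ)) (hCne : C.Nonempty) (hCcl : IsClosed C)
    (hCco : Convex ℝ C) (hCcone : ∀ r : ℝ, 0 ≤ r → ∀ x ∈ C, r • x ∈ C)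
    (hCproper : C ≠ univ)
    (U : Ω → ℝ) (hU : Measurable U)
    (hUdist : μ.map U = volume.restrict (Icc (0 : ℝ) 1)) :
    (∀ K : Set (Fin d → ℝ), IsCompact K →
      μ {ω | (Qlo μ X C (ENNReal.ofReal (U ω)) ∩ K).Nonempty} = ⨆ z ∈ K, FC μ X C z) ∧
    ∀ z : Fin d → ℝ,
      μ {ω | (Qlo μ X C (ENNReal.ofReal (U ω)) ∩ {z}).Nonempty} = FC μ X C z := by
  have hdual := exists_dual_nonzero C hCne hCcl hCco hCcone hCproper
  have hFC1 : ∀ z, FC μ X C z ≤ 1 := FC_le_one μ X C hdual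
  have main : ∀ K : Set (Fin d → ℝ),
      μ {ω | (Qlo μ X C (ENNReal.ofReal (U ω)) ∩ K).Nonempty} = ⨆ z ∈ K, FC μ X C z := by
    intro K
    set s : ℝ≥0∞ := ⨆ z ∈ K, FC μ X C z with hsdef
    have hs1 : s ≤ 1 := iSup₂_le fun z _ => hFC1 z
    set A := {ω | (Qlo μ X C (ENNReal.ofReal (U ω)) ∩ K).Nonempty} with hAdef
    have hA : A = {ω | ∃ z ∈ K, ENNReal.ofReal (U ω) ≤ FC μ X C z} := by
      ext ω
      simp only [hAdef, Qlo, Set.Nonempty, mem_inter_iff, mem_setOf_eq]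
      tauto
    have hAB : A ⊆ {ω | ENNReal.ofReal (U ω) ≤ s} := by
      rw [hA]
      rintro ω ⟨z, hzK, hz⟩
      exact hz.trans (le_iSup₂ (f := fun z _ => FC μ X C z) z hzK)
    have hBA : {ω | ENNReal.ofReal (U ω) ≤ s} ⊆ A ∪ {ω | ENNReal.ofReal (U ω) = s} := by
      intro ω hω
      have hω' : ENNReal.ofReal (U ω) ≤ s := hω
      rcases hω'.lt_or_eq with h | h
      case inr => exact Or.inr h
      · left
        rw [hA]
        rw [hsdef, lt_iSup_iff] at h
        obtain ⟨z, hz⟩ := h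
        rw [lt_iSup_iff] at hz
        obtain ⟨hzK, hz⟩ := hz
        exact ⟨z, hzK, hz.le⟩
    have h1 : μ A ≤ s := by
      calc μ A ≤ μ {ω | ENNReal.ofReal (U ω) ≤ s} := measure_mono hAB
        _ = s := measure_ofReal_le μ U hU hUdist s hs1
    have h2 : s ≤ μ A := by
      calc s = μ {ω | ENNReal.ofReal (U ω) ≤ s} :=
            (measure_ofReal_le μ U hU hUdist s hs1).symm
        _ ≤ μ A + μ {ω | ENNReal.ofReal (U ω) = s} :=
            le_trans (measure_mono hBA) (measure_union_le _ _)
        _ = μ A := by rw [measure_ofReal_eq μ U hU hUdist s hs1, add_zero]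
    exact le_antisymm h1 h2
  refine ⟨fun K _ => main K, fun z => ?_⟩
  rw [main {z}]
  simp
end
end
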